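/- Let F : ℂ³ → ℂ³ be the map F(x, y, z) = (x⁴ + yx² + y²x + zx, y, z). Then the polynomial vector field η(X, Y, Z) = (4X, 2Y, 3Z − Y²) is liftable over F; an explicit lift is ξ(x, y, z) = (x, 2y, 3z − y²), i.e. (fderiv ℂ F (x,y,z))(ξ(x,y,z)) = η(F(x,y,z)) for all (x, y, z) ∈ ℂ³. -/

import Mathlib

open Filter Topology

/-- `η` is liftable over `f`: there is a map `ξ`, analytic on a neighbourhood of `0`,
with `df ∘ ξ = η ∘ f` near `0`. -/
def Liftable {E F : Type*} [NormedAddCommGroup E] [NormedSpace ℂ E]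
    [NormedAddCommGroup F] [NormedSpace ℂ F] (f : E → F) (η : F → F) : Prop :=
  ∃ ξ : E → E, (∀ᶠ x in 𝓝 0, AnalyticAt ℂ ξ x) ∧
    ∀ᶠ x in 𝓝 0, fderiv ℂ f x (ξ x) = η (f x)

/-!
`F` is the unfolding `(x, u) ↦ (g(x, u), u)` of `x ↦ x⁴` with
`g(x, y, z) = x⁴ + yx² + y²x + zx`, so `dF · ξ = (dg · ξ, ξ_y, ξ_z)`. With weights `1, 2, 3`
on `x, y, z` the monomials `x⁴, yx², zx` have degree `4`; the Euler field `(x, 2y, 3z)` would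
give `dg · ξ = 4g` up to the degree-`5` term `y²x`, and the correction `-y²` in the
`z`-component cancels exactly that term. Hence `dg · ξ = 4g` and `dF · ξ = η ∘ F`.
-/

theorem Liftable.of_forall {E F : Type*} [NormedAddCommGroup E] [NormedSpace ℂ E]
    [NormedAddCommGroup F] [NormedSpace ℂ F] {f : E → F} {η : F → F} {ξ : E → E}
    (hξ : ∀ x, AnalyticAt ℂ ξ x) (hlift : ∀ x, fderiv ℂ f x (ξ x) = η (f x)) :
    Liftable f η :=
  ⟨ξ, .of_forall hξ, .of_forall hlift⟩

theorem fderiv_unfolding_apply {E P G : Type*} [NormedAddCommGroup E] [NormedSpace ℂ E]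
    [NormedAddCommGroup P] [NormedSpace ℂ P] [NormedAddCommGroup G] [NormedSpace ℂ G]
    {g : E × P → G} {p : E × P} (hg : DifferentiableAt ℂ g p) (v : E × P) :
    fderiv ℂ (fun q ↦ (g q, q.2)) p v = (fderiv ℂ g p v, v.2) := by
  rw [(hg.hasFDerivAt.prodMk hasFDerivAt_snd).fderiv]
  rfl

def quarticUnfolding (p : ℂ × ℂ × ℂ) : ℂ :=
  p.1 ^ 4 + p.2.1 * p.1 ^ 2 + p.2.1 ^ 2 * p.1 + p.2.2 * p.1

theorem differentiable_quarticUnfolding : Differentiable ℂ quarticUnfolding := by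
  unfold quarticUnfolding
  fun_prop

theorem fderiv_quarticUnfolding_apply (x y z a b c : ℂ) :
    fderiv ℂ quarticUnfolding (x, y, z) (a, b, c) =
      (4 * x ^ 3 + 2 * y * x + y ^ 2 + z) * a + (x ^ 2 + 2 * y * x) * b + x * c := by
  have hx := hasFDerivAt_fst (𝕜 := ℂ) (p := (x, y, z))
  have hy := (hasFDerivAt_snd (𝕜 := ℂ) (p := (x, y, z))).fst
  have hz := (hasFDerivAt_snd (𝕜 := ℂ) (p := (x, y, z))).snd
  have h : HasFDerivAt quarticUnfolding _ (x, y, z) :=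
    (((hx.pow 4).add (hy.mul (hx.pow 2))).add ((hy.pow 2).mul hx)).add (hz.mul hx)
  rw [h.fderiv]
  simp only [Nat.add_one_sub_one, nsmul_eq_mul, Nat.cast_ofNat, pow_one, add_apply, smul_apply,
    ContinuousLinearMap.coe_fst', smul_eq_mul, ContinuousLinearMap.comp_apply,
    ContinuousLinearMap.coe_snd']
  ring

theorem fderiv_quarticUnfolding_euler (x y z : ℂ) :
    fderiv ℂ quarticUnfolding (x, y, z) (x, 2 * y, 3 * z - y ^ 2) =
      4 * quarticUnfolding (x, y, z) := by
  rw [fderiv_quarticUnfolding_apply, quarticUnfolding]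
  ring

/-- Example 4.11 i): for `F(x,y,z) = (x⁴ + yx² + y²x + zx, y, z)`, the Euler-type vector
field `η(X,Y,Z) = (4X, 2Y, 3Z − Y²)` is liftable over `F`, with the explicit lift
`ξ(x,y,z) = (x, 2y, 3z − y²)`. -/
theorem euler_field_liftable
    (F : ℂ × ℂ × ℂ → ℂ × ℂ × ℂ)
    (hF : ∀ x y z : ℂ,
      F (x, y, z) = (x ^ 4 + y * x ^ 2 + y ^ 2 * x + z * x, y, z))
    (η : ℂ × ℂ × ℂ → ℂ × ℂ × ℂ)
    (hη : ∀ X Y Z : ℂ, η (X, Y, Z) = (4 * X, 2 * Y, 3 * Z - Y ^ 2)) :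
    (∀ x y z : ℂ,
      fderiv ℂ F (x, y, z) (x, 2 * y, 3 * z - y ^ 2) = η (F (x, y, z))) ∧
    Liftable F η := by
  have hF_unfolding : F = fun q ↦ (quarticUnfolding q, q.2) :=
    funext fun ⟨x, y, z⟩ ↦ hF x y z
  have hlift : ∀ x y z : ℂ,
      fderiv ℂ F (x, y, z) (x, 2 * y, 3 * z - y ^ 2) = η (F (x, y, z)) := by
    intro x y z
    rw [hF_unfolding, fderiv_unfolding_apply (differentiable_quarticUnfolding _),
      fderiv_quarticUnfolding_euler, hη]
  have hξ (q : ℂ × ℂ × ℂ) :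
      AnalyticAt ℂ (fun q : ℂ × ℂ × ℂ ↦ (q.1, 2 * q.2.1, 3 * q.2.2 - q.2.1 ^ 2)) q := by
    have hy : AnalyticAt ℂ (fun q : ℂ × ℂ × ℂ ↦ q.2.1) q := analyticAt_fst.comp analyticAt_snd
    have hz : AnalyticAt ℂ (fun q : ℂ × ℂ × ℂ ↦ q.2.2) q := analyticAt_snd.comp analyticAt_snd
    exact analyticAt_fst.prod ((analyticAt_const.mul hy).prod
      ((analyticAt_const.mul hz).sub (hy.pow 2)))
  exact ⟨hlift, Liftable.of_forall hξ fun q ↦ hlift q.1 q.2.1 q.2.2⟩
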